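/- Let κ be regular uncountable with |α|^{ℵ₀} < κ for all α < κ, and suppose every stationary subset of κ admits a Δ-system refinement: explicitly, for every stationary S ⊆ κ consisting of ordinals of uncountable cofinality and every family ⟨B_α : α ∈ S⟩ of countable sets, there is a stationary Z ⊆ S on which the family forms a Δ-system. (This is Lemma 5.4(a) specialized to the club filter with θ = ℵ₁.) -/

import Mathlib

/-
Work in the well-order `Iio κ.ord`, coding the countable sets `B α` (whose union has size at
most `κ`) as countable sets of ordinals below `κ`. For `α ∈ S` the trace `b α ∩ α` is bounded
below `α` because `cf α > ω`, so by Fodor's lemma the bound is at most a fixed `γ` on a stationary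
set; as there are fewer than `κ` countable subsets of `γ`, the trace itself is a constant `p` on a
stationary set. On the club of `β` with `b α ⊆ β` for all `α < β`, two members of the family
then meet exactly in `p`.
-/

universe u

/-- `C` is a closed unbounded subset of the ordinal `κ`. -/
def IsClubIn (C : Set Ordinal.{u}) (κ : Ordinal.{u}) : Prop :=
  C ⊆ Set.Iio κ ∧ (∀ γ < κ, ∃ β ∈ C, γ < β ∧ β < κ) ∧
    ∀ δ < κ, 0 < δ → (∀ γ < δ, ∃ β ∈ C, γ < β ∧ β < δ) → δ ∈ C

/-- `S` is a stationary subset of the ordinal `κ`. -/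
def IsStationaryIn (S : Set Ordinal.{u}) (κ : Ordinal.{u}) : Prop :=
  ∀ C, IsClubIn C κ → (S ∩ C).Nonempty

universe v w

open Cardinal Order Set

def IsDeltaSystem {ι V : Type*} (B : ι → Set V) (Z : Set ι) (r : Set V) : Prop :=
  ∀ a ∈ Z, ∀ a' ∈ Z, a ≠ a' → B a ∩ B a' = r

section DeltaSystem

variable {ι ι' V W : Type*} {B : ι → Set V} {Z : Set ι} {r : Set V}

theorem IsDeltaSystem.image {g : ι' → ι} {Z : Set ι'} (h : IsDeltaSystem (B ∘ g) Z r) :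
    IsDeltaSystem B (g '' Z) r := by
  rintro _ ⟨a, ha, rfl⟩ _ ⟨a', ha', rfl⟩ hne
  exact h a ha a' ha' (ne_of_apply_ne g hne)

theorem IsDeltaSystem.of_image_preimage_val {U : Set V} (hBU : ∀ a ∈ Z, B a ⊆ U) {e : U → W}
    (he : e.Injective) {r : Set W} (h : IsDeltaSystem (fun a => e '' (Subtype.val ⁻¹' B a)) Z r) :
    IsDeltaSystem B Z (Subtype.val '' (e ⁻¹' r)) := by
  intro a ha a' ha' hne
  rw [← h a ha a' ha' hne, ← image_inter he, preimage_image_eq _ he, ← preimage_inter,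
    image_preimage_eq_of_subset]
  simpa using inter_subset_left.trans (hBU a ha)

end DeltaSystem

section WellOrder

variable {α : Type v} [LinearOrder α]

theorem IsUpperSet.isClub {s : Set α} (hs : IsUpperSet s) (hne : s.Nonempty) : IsClub s :=
  ⟨hs.dirSupClosed, fun x => ⟨max x hne.some, hs (le_max_right _ _) hne.some_mem, le_max_left _ _⟩⟩

theorem isDeltaSystem_of_inter_Iio_eq {Z : Set α} {b : α → Set α} {p : Set α}
    (htrace : ∀ a ∈ Z, b a ∩ Iio a = p) (hbelow : ∀ a ∈ Z, ∀ a' ∈ Z, a < a' → b a ⊆ Iio a') :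
    IsDeltaSystem b Z p := by
  have key : ∀ a ∈ Z, ∀ a' ∈ Z, a < a' → b a ∩ b a' = p := fun a ha a' ha' hlt => by
    refine subset_antisymm (fun x hx => ?_) (fun x hx => ⟨?_, ?_⟩)
    · exact htrace a' ha' ▸ ⟨hx.2, hbelow a ha a' ha' hlt hx.1⟩
    · exact (htrace a ha ▸ hx : x ∈ b a ∩ Iio a).1
    · exact (htrace a' ha' ▸ hx : x ∈ b a' ∩ Iio a').1
  intro a ha a' ha' hne
  rcases hne.lt_or_gt with h | h
  exacts [key a ha a' ha' h, (inter_comm _ _).trans (key a' ha' a ha h)]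

theorem IsStationary.inter_isClub [WellFoundedLT α] (hα : cof α ≠ ℵ₀) {s t : Set α}
    (hs : IsStationary s) (ht : IsClub t) : IsStationary (s ∩ t) := fun u hu => by
  simpa only [inter_assoc] using hs (ht.inter hα hu)

theorem exists_subset_Iio_of_countable (hα : ℵ₀ < cof α) {s : Set α} (hs : s.Countable) :
    ∃ m, s ⊆ Iio m := by
  by_contra! h
  have hcof : IsCofinal s := fun x => by
    obtain ⟨y, hy, hxy⟩ := not_subset.1 (h x)
    exact ⟨y, hy, not_lt.1 hxy⟩
  exact (hα.trans_le ((cof_le hcof).trans (le_aleph0_iff_set_countable.2 hs))).false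

theorem exists_lt_subset_Iio_of_countable {a : α} (ha : ℵ₀ < cof (Iio a)) {s : Set α}
    (hs : s.Countable) (hsa : s ⊆ Iio a) : ∃ m < a, s ⊆ Iio m := by
  obtain ⟨m, hm⟩ := exists_subset_Iio_of_countable ha (hs.preimage Subtype.val_injective)
  exact ⟨m, m.2, fun x hx => hm (show (⟨x, hsa hx⟩ : Iio a) ∈ _ from hx)⟩

theorem IsStationary.exists_isStationary_fiber [WellFoundedLT α] (hα : cof α ≠ ℵ₀) {T : Set α}
    (hT : IsStationary T) {β : Type w} {g : α → β} {P : Set β} (hg : MapsTo g T P)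
    (hP : lift.{v} #P < lift.{w} (cof α)) : ∃ p ∈ P, IsStationary {a ∈ T | g a = p} := by
  have hcover : T ⊆ ⋃ p : P, {a ∈ T | g a = p} := fun a ha =>
    mem_iUnion.2 ⟨⟨g a, hg ha⟩, ha, rfl⟩
  obtain ⟨⟨p, hp⟩, h⟩ := (isStationary_iUnion_iff hα hP).1 (hT.mono hcover)
  exact ⟨p, hp, h⟩

def diagInter (C : α → Set α) : Set α :=
  {b | ∀ a < b, b ∈ C a}

variable [WellFoundedLT α] [IsRegularCardinalOrder α]

theorem mk_Iio_lt_cof (a : α) : #(Iio a) < cof α := by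
  rw [cof_eq_cardinalMk]
  exact mk_Iio_lt a ord_cardinalMk

attribute [local instance] WellFoundedLT.toOrderBot WellFoundedLT.conditionallyCompleteLinearOrderBot

theorem isClub_diagInter (hα : ℵ₀ < cof α) {C : α → Set α} (hC : ∀ a, IsClub (C a)) :
    IsClub (diagInter C) := by
  refine ⟨dirSupClosed_iff_of_linearOrder.2 fun d hd _ x hx a hax => ?_, fun x => ?_⟩
  · obtain ⟨y, hyd, hay⟩ : ∃ y ∈ d, a < y := by
      by_contra! h
      exact hax.not_ge (hx.2 h)
    refine (hC a).isLUB_mem (t := {y ∈ d | a < y}) (fun y hy => hd hy.1 a hy.2) ⟨y, hyd, hay⟩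
      ⟨fun y hy => hx.1 hy.1, fun u hu => hx.2 fun z hz => ?_⟩
    rcases le_or_gt z a with h | h
    · exact h.trans (hay.le.trans (hu ⟨hyd, hay⟩))
    · exact hu ⟨hz, h⟩
  · have hnext : ∀ y, ∃ z, (∀ a < y, z ∈ C a) ∧ y ≤ z := fun y => by
      have hclub : IsClub (⋂ a : Iio y, C a) :=
        IsClub.iInter hα.ne' (by simpa using mk_Iio_lt_cof y) fun a => hC a
      obtain ⟨z, hz, hyz⟩ := hclub.isCofinal y
      exact ⟨z, fun a ha => mem_iInter.1 hz ⟨a, ha⟩, hyz⟩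
    choose g hgC hg using hnext
    have : Nonempty α := ⟨x⟩
    let s : ℕ → α := fun n => g^[n] x
    have hs_succ : ∀ n, s (n + 1) = g (s n) := fun n => Function.iterate_succ_apply' g n x
    have hs : Monotone s := monotone_nat_of_le_succ fun n => (hs_succ n).symm ▸ hg (s n)
    have hbdd : BddAbove (range s) := by
      obtain ⟨m, hm⟩ := exists_subset_Iio_of_countable hα (countable_range s)
      exact ⟨m, fun y hy => (hm hy).le⟩
    refine ⟨sSup (range s), fun a ha => ?_, le_csSup hbdd ⟨0, rfl⟩⟩
    obtain ⟨_, ⟨n, rfl⟩, han⟩ := exists_lt_of_lt_csSup (range_nonempty s) ha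
    refine (hC a).isLUB_mem (t := range fun m => s (n + m + 1)) ?_ (range_nonempty _)
      ⟨?_, fun u hu => csSup_le (range_nonempty s) ?_⟩
    · rintro _ ⟨m, rfl⟩
      show s (n + m + 1) ∈ C a
      rw [hs_succ]
      exact hgC _ a (han.trans_le (hs (Nat.le_add_right n m)))
    · rintro _ ⟨m, rfl⟩
      exact le_csSup hbdd ⟨_, rfl⟩
    · rintro _ ⟨m, rfl⟩
      exact (hs (by omega : m ≤ n + m + 1)).trans (hu ⟨m, rfl⟩)

theorem IsStationary.exists_isStationary_setOf_le (hα : ℵ₀ < cof α) {S : Set α}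
    (hS : IsStationary S) {f : α → α} (hf : ∀ a ∈ S, f a < a) :
    ∃ c, IsStationary {a ∈ S | f a ≤ c} := by
  by_contra! h
  simp_rw [not_isStationary_iff] at h
  choose D hD hSD using h
  obtain ⟨a, haS, haD⟩ := hS (isClub_diagInter hα hD)
  exact (hSD (f a)).ne_of_mem ⟨haS, le_rfl⟩ (haD _ (hf a haS)) rfl

theorem isClub_setOf_forall_lt_subset_Iio (hα : ℵ₀ < cof α) {S : Set α} {b : α → Set α}
    (hb : ∀ a ∈ S, ∃ m, b a ⊆ Iio m) : IsClub {β | ∀ a < β, a ∈ S → b a ⊆ Iio β} := by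
  have hC : ∀ a, IsClub {β | a ∈ S → b a ⊆ Iio β} := fun a => by
    refine IsUpperSet.isClub (fun β γ hβγ hβ ha => (hβ ha).trans (Iio_subset_Iio hβγ)) ?_
    by_cases ha : a ∈ S
    · obtain ⟨m, hm⟩ := hb a ha
      exact ⟨m, fun _ => hm⟩
    · exact ⟨a, fun h => absurd h ha⟩
  exact isClub_diagInter hα hC

theorem IsStationary.exists_isDeltaSystem_of_subsets (hα : ℵ₀ < cof α)
    (hpow : ∀ c < cof α, c ^ ℵ₀ < cof α) {S : Set α} (hS : IsStationary S)
    (hScof : ∀ a ∈ S, ℵ₀ < cof (Iio a)) {b : α → Set α} (hb : ∀ a ∈ S, (b a).Countable) :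
    ∃ Z ⊆ S, IsStationary Z ∧ ∃ r, IsDeltaSystem b Z r := by
  have hbound : ∀ a ∈ S, ∃ m < a, b a ∩ Iio a ⊆ Iio m := fun a ha =>
    exists_lt_subset_Iio_of_countable (hScof a ha) ((hb a ha).mono inter_subset_left)
      inter_subset_right
  choose! f hfa hf using hbound
  obtain ⟨c, hc⟩ := hS.exists_isStationary_setOf_le hα hfa
  have hP : lift.{v} #{p : Set α | p ⊆ Iio c ∧ #p ≤ ℵ₀} < lift.{v} (cof α) := by
    rw [lift_lt]
    exact (mk_bounded_subset_le _ _).trans_lt (hpow _ (max_lt (mk_Iio_lt_cof c) hα))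
  obtain ⟨p, -, hp⟩ := hc.exists_isStationary_fiber hα.ne' (g := fun a => b a ∩ Iio a)
    (P := {p : Set α | p ⊆ Iio c ∧ #p ≤ ℵ₀})
    (fun a ha => ⟨(hf a ha.1).trans (Iio_subset_Iio ha.2),
      (mk_le_mk_of_subset inter_subset_left).trans (le_aleph0_iff_set_countable.2 (hb a ha.1))⟩) hP
  have hclub := isClub_setOf_forall_lt_subset_Iio hα fun a ha =>
    exists_subset_Iio_of_countable hα (hb a ha)
  refine ⟨_, fun a ha => ha.1.1.1, hp.inter_isClub hα.ne' hclub, p,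
    isDeltaSystem_of_inter_Iio_eq (fun a ha => ha.1.2) fun a ha a' ha' hlt => ha'.2 a hlt ha.1.1.1⟩

theorem IsStationary.exists_isDeltaSystem {V : Type w} (hα : ℵ₀ < cof α)
    (hpow : ∀ c < cof α, c ^ ℵ₀ < cof α) {S : Set α} (hS : IsStationary S)
    (hScof : ∀ a ∈ S, ℵ₀ < cof (Iio a)) {B : α → Set V} (hB : ∀ a ∈ S, (B a).Countable) :
    ∃ Z ⊆ S, IsStationary Z ∧ ∃ r, IsDeltaSystem B Z r := by
  set U := ⋃ a ∈ S, B a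
  obtain ⟨e⟩ : Nonempty (U ↪ α) := by
    have hαinf : ℵ₀ ≤ lift.{w} #α := aleph0_le_lift.2 (hα.le.trans (cof_le_cardinalMk α))
    rw [← lift_mk_le']
    calc lift.{v} #U ≤ lift.{w} #S * ⨆ a : S, lift.{v} #(B a) := mk_biUnion_le_lift B S
      _ ≤ lift.{w} #α * ℵ₀ := by
        gcongr
        · exact lift_le.2 (mk_set_le S)
        · exact ciSup_le' fun a => by simpa using le_aleph0_iff_set_countable.2 (hB a a.2)
      _ = lift.{w} #α := mul_aleph0_eq hαinf
  obtain ⟨Z, hZS, hZ, r, hr⟩ := hS.exists_isDeltaSystem_of_subsets hα hpow hScof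
    (b := fun a => e '' (Subtype.val ⁻¹' B a))
    fun a ha => ((hB a ha).preimage Subtype.val_injective).image e
  exact ⟨Z, hZS, hZ, _,
    hr.of_image_preimage_val (fun a ha => subset_biUnion_of_mem (u := B) (hZS ha)) e.injective⟩

end WellOrder

section Ordinal

variable {k : Ordinal.{u}}

theorem IsClubIn.isClub_preimage {C : Set Ordinal.{u}} (hC : IsClubIn C k) :
    IsClub (Subtype.val ⁻¹' C : Set (Iio k)) := by
  refine ⟨dirSupClosed_iff_of_linearOrder.2 fun d hd ⟨y, hy⟩ x hx => ?_, fun x => ?_⟩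
  · by_cases hxd : x ∈ d
    · exact hd hxd
    have hlt : ∀ z ∈ d, z < x := fun z hz => (hx.1 hz).lt_of_ne (ne_of_mem_of_not_mem hz hxd)
    refine hC.2.2 x x.2 (pos_of_gt (show y.1 < x.1 from hlt y hy)) fun γ hγ => ?_
    obtain ⟨z, hz, hγz⟩ : ∃ z ∈ d, (⟨γ, hγ.trans x.2⟩ : Iio k) < z := by
      by_contra! h
      exact hγ.not_ge (hx.2 h)
    exact ⟨z, hd hz, hγz, hlt z hz⟩
  · obtain ⟨β, hβ, hxβ, hβk⟩ := hC.2.1 x x.2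
    exact ⟨⟨β, hβk⟩, hβ, hxβ.le⟩

theorem IsClub.isClubIn_image (hk : IsSuccLimit k) {D : Set (Iio k)} (hD : IsClub D) :
    IsClubIn (Subtype.val '' D) k := by
  refine ⟨image_subset_iff.2 fun x _ => x.2, fun γ hγ => ?_, fun δ hδk hδ0 hδ => ?_⟩
  · obtain ⟨β, hβ, hγβ⟩ := hD.isCofinal ⟨succ γ, hk.succ_lt hγ⟩
    exact ⟨β, mem_image_of_mem _ hβ, (lt_succ γ).trans_le hγβ, β.2⟩
  · refine ⟨⟨δ, hδk⟩, hD.isLUB_mem (t := {x ∈ D | x.1 < δ}) (fun x hx => hx.1) ?_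
      ⟨fun x hx => hx.2.le, fun u hu => ?_⟩, rfl⟩
    · obtain ⟨_, ⟨x, hx, rfl⟩, -, hxδ⟩ := hδ 0 hδ0
      exact ⟨x, hx, hxδ⟩
    · by_contra! hu'
      obtain ⟨_, ⟨x, hx, rfl⟩, hux, hxδ⟩ := hδ u hu'
      exact (hu ⟨hx, hxδ⟩).not_gt hux

theorem isStationaryIn_iff_isStationary_preimage (hk : IsSuccLimit k) {S : Set Ordinal.{u}} :
    IsStationaryIn S k ↔ IsStationary (Subtype.val ⁻¹' S : Set (Iio k)) := by
  refine ⟨fun hS D hD => ?_, fun hS C hC => ?_⟩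
  · obtain ⟨_, hx, x, hxD, rfl⟩ := hS _ (hD.isClubIn_image hk)
    exact ⟨x, hx, hxD⟩
  · obtain ⟨x, hxS, hxC⟩ := hS hC.isClub_preimage
    exact ⟨x, hxS, hxC⟩

theorem cof_Iio_subtype (a : Iio k) : cof (Iio a) = lift.{u + 1} a.1.cof := by
  let e : Iio a ≃o Iio a.1 :=
    { toFun := fun x => ⟨x.1.1, x.2⟩
      invFun := fun y => ⟨⟨y.1, mem_Iio.2 (lt_trans y.2 a.2)⟩, y.2⟩
      left_inv := fun _ => rfl
      right_inv := fun _ => rfl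
      map_rel_iff' := Iff.rfl }
  rw [e.cof_congr, Ordinal.cof_Iio, Ordinal.lift_cof]

theorem Cardinal.IsRegular.cof_Iio_ord {κ : Cardinal.{u}} (h : κ.IsRegular) :
    cof (Iio κ.ord) = Cardinal.lift.{u + 1} κ := by
  rw [Ordinal.cof_Iio, ← Ordinal.lift_cof, h.cof_ord]

theorem Cardinal.IsRegular.isRegularCardinalOrder_Iio_ord {κ : Cardinal.{u}} (h : κ.IsRegular) :
    IsRegularCardinalOrder (Iio κ.ord) :=
  ⟨by rw [Ordinal.type_lt_Iio, h.cof_Iio_ord, ← lift_ord]⟩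

end Ordinal

/-- Δ-system refinement on stationary sets of ordinals of
uncountable cofinality, for families of countable sets (Lemma 5.4(a) for the
club filter with `θ = ℵ₁`). -/
theorem stmt6 {V : Type u} (κ : Cardinal.{u})
    (hreg : κ.IsRegular) (hunc : Cardinal.aleph0 < κ)
    (hsmall : ∀ α : Ordinal.{u}, α < κ.ord → α.card ^ Cardinal.aleph0 < κ)
    (S : Set Ordinal.{u})
    (hSsub : S ⊆ {δ | δ < κ.ord ∧ Cardinal.aleph0 < δ.cof})
    (hSstat : IsStationaryIn S κ.ord)
    (B : Ordinal.{u} → Set V)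
    (hB : ∀ α ∈ S, Cardinal.mk (B α) ≤ Cardinal.aleph0) :
    ∃ Z ⊆ S, IsStationaryIn Z κ.ord ∧
      ∃ Bs : Set V, ∀ α ∈ Z, ∀ β ∈ Z, α ≠ β → B α ∩ B β = Bs := by
  have hk : IsSuccLimit κ.ord := isSuccLimit_ord hreg.aleph0_le
  have := hreg.isRegularCardinalOrder_Iio_ord
  have hcof := hreg.cof_Iio_ord
  have hpow : ∀ c < cof (Iio κ.ord), c ^ ℵ₀ < cof (Iio κ.ord) := by
    rw [hcof]
    intro c hc
    obtain ⟨c, rfl⟩ := mem_range_lift_of_le hc.le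
    rw [lift_lt] at hc
    rw [← lift_aleph0.{u + 1, u}, ← lift_power, lift_lt]
    simpa using hsmall c.ord (ord_lt_ord.2 hc)
  obtain ⟨Z, hZS, hZ, r, hr⟩ :=
    ((isStationaryIn_iff_isStationary_preimage hk).1 hSstat).exists_isDeltaSystem
      (by rwa [hcof, aleph0_lt_lift]) hpow
      (fun a ha => by rw [cof_Iio_subtype, aleph0_lt_lift]; exact (hSsub ha).2)
      (B := fun a => B a) fun a ha => le_aleph0_iff_set_countable.1 (hB a ha)
  refine ⟨Subtype.val '' Z, image_subset_iff.2 hZS, ?_, r, hr.image⟩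
  rwa [isStationaryIn_iff_isStationary_preimage hk, preimage_image_eq _ Subtype.val_injective]
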